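/- Let I be a finite set, let h : {−1,1}^I → ℝ, let n ≥ 1, and let J₁, …, J_n, W be pairwise disjoint subsets of I. Then 𝐐̂_h[ S ⊆ I : S∩J_j ≠ ∅ for all j ∈ {1,…,n} and S∩W = ∅ ] ≤ 4ⁿ · ‖h‖_∞² · 𝐄[ 𝐏[ JP_{J₁,…,J_n}(h) | 𝓕_{W^c} ]² ], where ‖h‖_∞ = max_{ω} |h(ω)|. -/
import Mathlib


open scoped BigOperators

namespace Cube

variable {I : Type*} [Fintype I] [DecidableEq I]

/-- Expectation with respect to the uniform probability measure on the discrete cube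
`{-1,1}^I` (encoded as `I → Bool`, with `true` standing for `+1`). -/
noncomputable def expect (f : (I → Bool) → ℝ) : ℝ :=
  (∑ ω : I → Bool, f ω) / (Fintype.card (I → Bool) : ℝ)

/-- The Fourier character `χ_S(ω) = ∏_{i∈S} ω_i`. -/
noncomputable def chi (S : Finset I) (ω : I → Bool) : ℝ :=
  ∏ i ∈ S, (if ω i then (1 : ℝ) else -1)

/-- The Fourier coefficient `ĥ(S) = 𝐄[h·χ_S]`. -/
noncomputable def fourier (h : (I → Bool) → ℝ) (S : Finset I) : ℝ :=
  expect fun ω => h ω * chi S ω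

/-- The unnormalized spectral measure `𝐐̂_h[𝒜] = ∑_{S∈𝒜} ĥ(S)²`. -/
noncomputable def Qhat (h : (I → Bool) → ℝ) (𝒜 : Finset I → Prop) : ℝ := by
  classical
  exact ∑ S : Finset I, if 𝒜 S then fourier h S ^ 2 else 0

/-- The conditional expectation `𝐄[h | 𝓕_B]` given the coordinates in `B`:
`𝐄[h | 𝓕_B](ω) = 2^{-|I∖B|} · ∑_{ω' : ω'_i = ω_i ∀ i∈B} h(ω')`. -/
noncomputable def condExp (B : Finset I) (h : (I → Bool) → ℝ) (ω : I → Bool) : ℝ := by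
  classical
  exact (∑ ω' : I → Bool, if ∀ i ∈ B, ω' i = ω i then h ω' else 0) /
    2 ^ (Finset.univ \ B).card

/-- `J` is pivotal for `h` at `ω`: changing the values of the coordinates in `J` can
change the value of `h`. -/
def Pivotal (h : (I → Bool) → ℝ) (J : Finset I) (ω : I → Bool) : Prop :=
  ∃ ω' : I → Bool, (∀ i, i ∉ J → ω' i = ω i) ∧ h ω' ≠ h ω

/-- `J 0, …, J (n-1)` are jointly pivotal for `h` at `ω`: for every `j₀` there is a
choice of configuration in `⋃_{j ≠ j₀} J j` making `J j₀` pivotal. -/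
def JointlyPivotal (h : (I → Bool) → ℝ) {n : ℕ} (J : Fin n → Finset I)
    (ω : I → Bool) : Prop :=
  ∀ j₀ : Fin n, ∃ ω' : I → Bool,
    (∀ i, (∀ j, j ≠ j₀ → i ∉ J j) → ω' i = ω i) ∧ Pivotal h (J j₀) ω'


/-- paste: coordinates in `B` from `η`, the rest from `ω`. -/
def q (B : Finset I) (η ω : I → Bool) : I → Bool := fun i => if i ∈ B then η i else ω i

lemma sum_chi (U : Finset I) :
    ∑ ξ : I → Bool, chi U ξ = if U = ∅ then (Fintype.card (I → Bool) : ℝ) else 0 := by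
  rcases eq_or_ne U ∅ with hU | hU
  · subst hU; simp [chi]
  · rw [if_neg hU]
    obtain ⟨i₀, hi₀⟩ := Finset.nonempty_iff_ne_empty.2 hU
    apply Finset.sum_ninvolution (g := fun ξ => Function.update ξ i₀ (!ξ i₀))
    · intro ξ
      have key : chi U (Function.update ξ i₀ (!ξ i₀)) = - chi U ξ := by
        unfold chi
        rw [← Finset.mul_prod_erase _ _ hi₀, ← Finset.mul_prod_erase _ _ hi₀]
        have h1 : ∀ i ∈ U.erase i₀,
            (if Function.update ξ i₀ (!ξ i₀) i then (1:ℝ) else -1)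
              = (if ξ i then (1:ℝ) else -1) := by
          intro i hi
          rw [Function.update_of_ne (Finset.ne_of_mem_erase hi)]
        rw [Finset.prod_congr rfl h1, Function.update_self]
        cases hb : ξ i₀ <;> simp [hb]
      rw [key]; ring
    · intro ξ _
      intro hcon
      have := congrFun hcon i₀
      rw [Function.update_self] at this
      exact (Bool.not_ne_self (ξ i₀)) this
    · intro ξ; exact Finset.mem_univ _
    · intro ξ
      funext i
      by_cases hi : i = i₀
      · subst hi; simp
      · simp [Function.update_of_ne hi]

lemma sum_chi_mul (ω ω' : I → Bool) :
    ∑ S : Finset I, chi S ω * chi S ω'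
      = if ω = ω' then (Fintype.card (I → Bool) : ℝ) else 0 := by
  have hterm : ∀ S : Finset I, chi S ω * chi S ω'
      = ∏ i ∈ S, ((if ω i then (1:ℝ) else -1) * (if ω' i then (1:ℝ) else -1)) := by
    intro S; rw [chi, chi, ← Finset.prod_mul_distrib]
  set a : I → ℝ := fun i => (if ω i then (1:ℝ) else -1) * (if ω' i then (1:ℝ) else -1) with ha
  have key : ∑ S : Finset I, chi S ω * chi S ω' = ∏ i : I, (a i + 1) := by
    rw [Finset.prod_add]
    rw [← Finset.powerset_univ]
    refine (Finset.sum_congr rfl fun S _ => ?_).symm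
    rw [hterm]; simp
  rw [key]
  rcases eq_or_ne ω ω' with h | h
  · subst h
    rw [if_pos rfl]
    have : ∀ i : I, a i + 1 = 2 := by intro i; cases hb : ω i <;> simp [ha, hb] <;> norm_num
    rw [Finset.prod_congr rfl fun i _ => this i, Finset.prod_const]
    simp [Fintype.card_fun]
  · rw [if_neg h]
    have : ∃ i, ω i ≠ ω' i := by
      by_contra hcon; push_neg at hcon; exact h (funext hcon)
    obtain ⟨i₀, hi₀⟩ := this
    apply Finset.prod_eq_zero (Finset.mem_univ i₀)
    cases hb : ω i₀ <;> cases hb' : ω' i₀ <;> simp_all [ha]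

lemma card_pos_real : (0:ℝ) < (Fintype.card (I → Bool) : ℝ) := by
  exact_mod_cast Fintype.card_pos

lemma parseval (f : (I → Bool) → ℝ) :
    ∑ S : Finset I, (fourier f S) ^ 2 = expect (fun ω => f ω ^ 2) := by
  have hN := card_pos_real (I := I)
  set N : ℝ := (Fintype.card (I → Bool) : ℝ) with hNdef
  have step : ∀ S : Finset I, (fourier f S) ^ 2
      = (∑ ω : I → Bool, ∑ ω' : I → Bool,
          f ω * f ω' * (chi S ω * chi S ω')) / N ^ 2 := by
    intro S
    rw [fourier, expect, div_pow, sq]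
    rw [Finset.sum_mul_sum]
    congr 1
    refine Finset.sum_congr rfl fun ω _ => Finset.sum_congr rfl fun ω' _ => ?_; ring
  calc ∑ S : Finset I, (fourier f S) ^ 2
      = (∑ S : Finset I, ∑ ω : I → Bool, ∑ ω' : I → Bool,
          f ω * f ω' * (chi S ω * chi S ω')) / N ^ 2 := by
        rw [Finset.sum_congr rfl fun S _ => step S, ← Finset.sum_div]
    _ = (∑ ω : I → Bool, ∑ ω' : I → Bool, f ω * f ω' *
          (∑ S : Finset I, chi S ω * chi S ω')) / N ^ 2 := by
        congr 1
        rw [Finset.sum_comm]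
        refine Finset.sum_congr rfl fun ω _ => ?_
        rw [Finset.sum_comm]
        refine Finset.sum_congr rfl fun ω' _ => ?_
        rw [Finset.mul_sum]
    _ = (∑ ω : I → Bool, f ω ^ 2 * N) / N ^ 2 := by
        congr 1
        refine Finset.sum_congr rfl fun ω _ => ?_
        rw [Finset.sum_congr rfl fun ω' (_ : ω' ∈ Finset.univ) => by rw [sum_chi_mul]]
        have hsplit : ∀ ω' : I → Bool,
            f ω * f ω' * (if ω = ω' then N else 0) = if ω = ω' then f ω * f ω' * N else 0 :=
          fun ω' => by split_ifs <;> ring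
        rw [Finset.sum_congr rfl fun ω' _ => hsplit ω',
          Finset.sum_ite_eq Finset.univ ω (fun ω' => f ω * f ω' * N)]
        simp [sq]
    _ = expect (fun ω => f ω ^ 2) := by
        rw [expect, ← Finset.sum_mul, sq, mul_div_mul_right _ _ hN.ne']

lemma q_q (B : Finset I) (x y : I → Bool) : q B (q B y x) (q B x y) = y := by
  funext i; by_cases hi : i ∈ B <;> simp [q, hi]

lemma chi_q (B S : Finset I) (ξ ζ : I → Bool) :
    chi S (q B ξ ζ) = chi (S ∩ B) ξ * chi (S \ B) ζ := by
  unfold chi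
  rw [← Finset.prod_filter_mul_prod_filter_not S (· ∈ B)]
  rw [Finset.filter_mem_eq_inter, ← Finset.sdiff_eq_filter]
  congr 1
  · refine Finset.prod_congr rfl fun i hi => ?_
    rw [Finset.mem_inter] at hi
    simp [q, hi.2]
  · refine Finset.prod_congr rfl fun i hi => ?_
    rw [Finset.mem_sdiff] at hi
    simp [q, hi.2]

lemma fourier_avg (B : Finset I) (f : (I → Bool) → ℝ) (S : Finset I) :
    fourier (fun ω => expect (fun η => f (q B η ω))) S
      = if S ∩ B = ∅ then fourier f S else 0 := by
  have hN := card_pos_real (I := I)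
  set N : ℝ := (Fintype.card (I → Bool) : ℝ) with hNdef
  have lhs : fourier (fun ω => expect (fun η => f (q B η ω))) S
      = (∑ p : (I → Bool) × (I → Bool), f (q B p.2 p.1) * chi S p.1) / N ^ 2 := by
    rw [fourier, expect]
    have : ∀ ω : I → Bool, expect (fun η => f (q B η ω)) * chi S ω
        = (∑ η : I → Bool, f (q B η ω) * chi S ω) / N := by
      intro ω
      rw [expect, ← Finset.sum_mul, div_mul_eq_mul_div]
    rw [Finset.sum_congr rfl fun ω _ => this ω, ← Finset.sum_div, div_div, ← sq,
      Fintype.sum_prod_type]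
  rw [lhs]
  have swap : ∑ p : (I → Bool) × (I → Bool), f (q B p.2 p.1) * chi S p.1
      = ∑ p : (I → Bool) × (I → Bool), f p.1 * (chi (S ∩ B) p.2 * chi (S \ B) p.1) := by
    have hinv : Function.Involutive
        (fun p : (I → Bool) × (I → Bool) => (q B p.2 p.1, q B p.1 p.2)) := by
      rintro ⟨x, y⟩
      simp only [Prod.mk.injEq]
      exact ⟨q_q B y x, q_q B x y⟩
    refine Fintype.sum_equiv hinv.toPerm _ _ fun p => ?_
    simp only [Function.Involutive.coe_toPerm]
    congr 1
    conv_lhs => rw [← q_q B p.2 p.1]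
    rw [chi_q]
  rw [swap]
  have factor : ∑ p : (I → Bool) × (I → Bool),
      f p.1 * (chi (S ∩ B) p.2 * chi (S \ B) p.1)
      = (∑ ζ : I → Bool, f ζ * chi (S \ B) ζ) * (∑ ξ : I → Bool, chi (S ∩ B) ξ) := by
    rw [Fintype.sum_prod_type, Finset.sum_mul_sum]
    refine Finset.sum_congr rfl fun ζ _ => Finset.sum_congr rfl fun ξ _ => by ring
  rw [factor, sum_chi]
  rcases eq_or_ne (S ∩ B) ∅ with hSB | hSB
  · rw [if_pos hSB, if_pos hSB]
    have hsd : S \ B = S := by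
      rw [Finset.sdiff_eq_self_iff_disjoint, Finset.disjoint_iff_inter_eq_empty]
      exact hSB
    rw [hsd, fourier, expect]
    rw [← hNdef, sq]
    rw [mul_comm ((∑ ζ : I → Bool, f ζ * chi S ζ)) N]
    rw [mul_div_mul_left _ _ hN.ne']
  · rw [if_neg hSB, if_neg hSB, mul_zero, zero_div]

open Classical in
lemma sum_paste (B : Finset I) (f : (I → Bool) → ℝ) (ω : I → Bool) :
    ∑ η : I → Bool, f (q B η ω)
      = 2 ^ (Finset.univ \ B).card *
        ∑ ω' : I → Bool, (if ∀ i ∈ Finset.univ \ B, ω' i = ω i then f ω' else 0) := by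
  classical
  set e := (Equiv.piEquivPiSubtypeProd (fun i : I => i ∈ B) (fun _ => Bool)).symm with he
  have step1 : ∑ η : I → Bool, f (q B η ω)
      = ∑ p : ({ i : I // i ∈ B } → Bool) × ({ i : I // ¬ i ∈ B } → Bool),
          f (q B (e p) ω) := by
    exact (Fintype.sum_equiv e (fun p => f (q B (e p) ω)) (fun η => f (q B η ω))
      (fun p => rfl)).symm
  have key : ∀ p : ({ i : I // i ∈ B } → Bool) × ({ i : I // ¬ i ∈ B } → Bool),
      q B (e p) ω = fun i => if h : i ∈ B then p.1 ⟨i, h⟩ else ω i := by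
    intro p
    funext i
    by_cases hi : i ∈ B
    · simp [q, hi, he, Equiv.piEquivPiSubtypeProd]
    · simp [q, hi]
  have step2 : ∑ p : ({ i : I // i ∈ B } → Bool) × ({ i : I // ¬ i ∈ B } → Bool),
      f (q B (e p) ω)
      = ∑ _b : { i : I // ¬ i ∈ B } → Bool, ∑ a : { i : I // i ∈ B } → Bool,
          f (fun i => if h : i ∈ B then a ⟨i, h⟩ else ω i) := by
    rw [Fintype.sum_prod_type]
    rw [Finset.sum_comm]
    exact Finset.sum_congr rfl fun b _ => Finset.sum_congr rfl fun a _ => by rw [key]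
  have step3 : ∑ a : { i : I // i ∈ B } → Bool,
      f (fun i => if h : i ∈ B then a ⟨i, h⟩ else ω i)
      = ∑ ω' : I → Bool, (if ∀ i ∈ Finset.univ \ B, ω' i = ω i then f ω' else 0) := by
    rw [← Finset.sum_filter]
    refine Finset.sum_bij' (fun a _ => fun i => if h : i ∈ B then a ⟨i, h⟩ else ω i)
      (fun ω' _ => fun x => ω' x.1) ?_ ?_ ?_ ?_ ?_
    · intro a _
      rw [Finset.mem_filter]
      refine ⟨Finset.mem_univ _, fun i hi => ?_⟩
      rw [Finset.mem_sdiff] at hi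
      show (if h : i ∈ B then a ⟨i, h⟩ else ω i) = ω i
      rw [dif_neg hi.2]
    · intro ω' _; exact Finset.mem_univ _
    · intro a _
      funext x
      show (if h : (x : I) ∈ B then a ⟨x, h⟩ else ω x) = a x
      rw [dif_pos x.2]
    · intro ω' hω'
      rw [Finset.mem_filter] at hω'
      funext i
      by_cases hi : i ∈ B
      · show (if h : i ∈ B then ω' i else ω i) = ω' i
        rw [dif_pos hi]
      · show (if h : i ∈ B then ω' i else ω i) = ω' i
        rw [dif_neg hi]
        exact (hω'.2 i (Finset.mem_sdiff.2 ⟨Finset.mem_univ _, hi⟩)).symm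
    · intro a _; rfl
  rw [step1, step2, step3, Finset.sum_const, nsmul_eq_mul]
  congr 1
  rw [Finset.card_univ, Fintype.card_fun, Fintype.card_bool, Fintype.card_subtype]
  have : Finset.univ \ B = Finset.filter (fun i : I => ¬ i ∈ B) Finset.univ := by
    ext i; simp
  rw [this]
  push_cast
  rfl

open Classical in
lemma condExp_sdiff_eq (B : Finset I) (f : (I → Bool) → ℝ) (ω : I → Bool) :
    condExp (Finset.univ \ B) f ω = expect (fun η => f (q B η ω)) := by
  classical
  rw [expect, sum_paste]
  rw [condExp]
  have h1 : (Finset.univ \ (Finset.univ \ B)) = B := by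
    rw [Finset.sdiff_sdiff_self_left]
    exact Finset.univ_inter B
  rw [h1]
  have hcard : (Fintype.card (I → Bool) : ℝ)
      = 2 ^ (Finset.univ \ B).card * 2 ^ B.card := by
    rw [Fintype.card_fun, Fintype.card_bool]
    rw [← pow_add]
    rw [Finset.card_sdiff_add_card_eq_card (Finset.subset_univ B), Finset.card_univ]
    norm_num
  rw [hcard]
  have h2 : ((2:ℝ) ^ B.card) ≠ 0 := by positivity
  have h3 : ((2:ℝ) ^ (Finset.univ \ B).card) ≠ 0 := by positivity
  field_simp

lemma delta_vanish (h : (I → Bool) → ℝ) {n : ℕ} (J : Fin n → Finset I) (W : Finset I)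
    (ω η : I → Bool) (hnp : ¬ JointlyPivotal h J (q W η ω)) :
    ∑ T : Finset (Fin n), (-1:ℝ) ^ T.card * h (q (W ∪ T.biUnion J) η ω) = 0 := by
  rw [JointlyPivotal] at hnp
  push_neg at hnp
  obtain ⟨j₀, H⟩ := hnp
  have key : ∀ T : Finset (Fin n), j₀ ∉ T →
      h (q (W ∪ (insert j₀ T).biUnion J) η ω) = h (q (W ∪ T.biUnion J) η ω) := by
    intro T hT
    have hx : ¬ Pivotal h (J j₀) (q (W ∪ T.biUnion J) η ω) := by
      apply H
      intro i hi
      show (if i ∈ W ∪ T.biUnion J then η i else ω i) = (if i ∈ W then η i else ω i)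
      by_cases hiW : i ∈ W
      · rw [if_pos (Finset.mem_union_left _ hiW), if_pos hiW]
      · have hiB : i ∉ T.biUnion J := by
          intro hmem
          obtain ⟨j, hjT, hij⟩ := Finset.mem_biUnion.1 hmem
          have hjne : j ≠ j₀ := fun he => hT (he ▸ hjT)
          exact hi j hjne hij
        rw [if_neg (fun hmem => (Finset.mem_union.1 hmem).elim hiW hiB), if_neg hiW]
    rw [Pivotal] at hx
    push_neg at hx
    apply hx
    intro i hiJ
    show (if i ∈ W ∪ (insert j₀ T).biUnion J then η i else ω i)
        = (if i ∈ W ∪ T.biUnion J then η i else ω i)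
    have hiff : i ∈ W ∪ (insert j₀ T).biUnion J ↔ i ∈ W ∪ T.biUnion J := by
      simp only [Finset.mem_union, Finset.mem_biUnion, Finset.mem_insert]
      constructor
      · rintro (hW | ⟨j, hj | hj, hij⟩)
        · exact Or.inl hW
        · exact absurd (hj ▸ hij) hiJ
        · exact Or.inr ⟨j, hj, hij⟩
      · rintro (hW | ⟨j, hj, hij⟩)
        · exact Or.inl hW
        · exact Or.inr ⟨j, Or.inr hj, hij⟩
    rw [if_congr hiff rfl rfl]
  apply Finset.sum_ninvolution
    (g := fun T => if j₀ ∈ T then T.erase j₀ else insert j₀ T)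
  · intro T
    by_cases hT : j₀ ∈ T
    · rw [if_pos hT]
      have h1 : insert j₀ (T.erase j₀) = T := Finset.insert_erase hT
      have h2 := key (T.erase j₀) (Finset.notMem_erase _ _)
      rw [h1] at h2
      rw [h2]
      have h3 : (T.erase j₀).card + 1 = T.card := Finset.card_erase_add_one hT
      rw [← h3]
      ring
    · rw [if_neg hT]
      rw [key T hT]
      rw [Finset.card_insert_of_notMem hT]
      ring
  · intro T _
    by_cases hT : j₀ ∈ T
    · rw [if_pos hT]
      intro he
      have : j₀ ∈ T.erase j₀ := by rw [he]; exact hT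
      exact Finset.notMem_erase j₀ T this
    · rw [if_neg hT]
      intro he
      have : j₀ ∈ insert j₀ T := Finset.mem_insert_self j₀ T
      rw [he] at this
      exact hT this
  · intro T; exact Finset.mem_univ _
  · intro T
    by_cases hT : j₀ ∈ T
    · rw [if_pos hT, if_neg (Finset.notMem_erase j₀ T), Finset.insert_erase hT]
    · rw [if_neg hT, if_pos (Finset.mem_insert_self j₀ T), Finset.erase_insert hT]

lemma expect_mono {f g : (I → Bool) → ℝ} (hfg : ∀ ω, f ω ≤ g ω) : expect f ≤ expect g := by
  unfold expect
  have hN := card_pos_real (I := I)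
  gcongr with ω
  exact hfg ω

lemma expect_abs_le (f : (I → Bool) → ℝ) : |expect f| ≤ expect (fun ω => |f ω|) := by
  unfold expect
  have hN := card_pos_real (I := I)
  rw [abs_div, abs_of_pos hN]
  gcongr
  exact Finset.abs_sum_le_sum_abs _ _

lemma expect_nonneg {f : (I → Bool) → ℝ} (hf : ∀ ω, 0 ≤ f ω) : 0 ≤ expect f := by
  unfold expect
  have hN := card_pos_real (I := I)
  apply div_nonneg _ hN.le
  exact Finset.sum_nonneg fun ω _ => hf ω

lemma expect_const_mul (k : ℝ) (f : (I → Bool) → ℝ) :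
    expect (fun ω => k * f ω) = k * expect f := by
  unfold expect
  rw [← Finset.mul_sum, mul_div_assoc]

lemma fourier_sum {α : Type*} (s : Finset α) (c : α → ℝ) (g : α → (I → Bool) → ℝ)
    (S : Finset I) :
    fourier (fun ω => ∑ t ∈ s, c t * g t ω) S = ∑ t ∈ s, c t * fourier (g t) S := by
  unfold fourier expect
  rw [Finset.sum_congr rfl fun ω (_ : ω ∈ Finset.univ) =>
    Finset.sum_mul s (fun t => c t * g t ω) (chi S ω)]
  rw [Finset.sum_comm, Finset.sum_div]
  refine Finset.sum_congr rfl fun t _ => ?_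
  have hterm : ∀ ω : I → Bool, c t * g t ω * chi S ω = c t * (g t ω * chi S ω) :=
    fun ω => by ring
  rw [Finset.sum_congr rfl fun ω _ => hterm ω, ← Finset.mul_sum, mul_div_assoc]


open Classical in
/-- **Lemma (spectral mass and jointly pivotal sets).**
Let `I` be a finite set, `h : {-1,1}^I → ℝ`, `n ≥ 1`, and let `J₁, …, J_n, W` be
pairwise disjoint subsets of `I`.  Then
`𝐐̂_h[ S∩J_j ≠ ∅ ∀j, S∩W = ∅ ] ≤ 4ⁿ · ‖h‖_∞² · 𝐄[ 𝐏[ JP_{J₁,…,J_n}(h) | 𝓕_{W^c} ]² ]`. -/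
theorem spectral_mass_le_jointly_pivotal {I : Type*} [Fintype I] [DecidableEq I]
    (h : (I → Bool) → ℝ) (n : ℕ) (hn : 1 ≤ n) (J : Fin n → Finset I) (W : Finset I)
    (hJJ : ∀ j j' : Fin n, j ≠ j' → Disjoint (J j) (J j'))
    (hJW : ∀ j : Fin n, Disjoint (J j) W) :
    Qhat h (fun S => (∀ j : Fin n, (S ∩ J j).Nonempty) ∧ S ∩ W = ∅)
      ≤ 4 ^ n * (⨆ ω : I → Bool, |h ω|) ^ 2 *
        expect (fun ω =>
          (condExp (Finset.univ \ W)
            (fun ω' => if JointlyPivotal h J ω' then (1 : ℝ) else 0) ω) ^ 2) := by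
  set M : ℝ := ⨆ ω : I → Bool, |h ω| with hM
  have hMb : ∀ ω : I → Bool, |h ω| ≤ M := by
    intro ω
    rw [hM]
    exact le_ciSup (f := fun ω : I → Bool => |h ω|) (Finite.bddAbove_range _) ω
  have hM0 : 0 ≤ M := le_trans (abs_nonneg _) (hMb (fun _ => true))
  set g : (I → Bool) → ℝ := fun ω' => if JointlyPivotal h J ω' then (1 : ℝ) else 0 with hg
  set F : (I → Bool) → ℝ := fun ω => ∑ T : Finset (Fin n),
    (-1:ℝ) ^ T.card * expect (fun η => h (q (W ∪ T.biUnion J) η ω)) with hF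
  -- Step A : Fourier coefficients of F
  have hFourier : ∀ S : Finset I, fourier F S
      = if (∀ j : Fin n, (S ∩ J j).Nonempty) ∧ S ∩ W = ∅ then fourier h S else 0 := by
    intro S
    rw [hF, fourier_sum]
    rw [Finset.sum_congr rfl fun T (_ : T ∈ Finset.univ) => by
      rw [fourier_avg (W ∪ T.biUnion J) h S]]
    by_cases hSW : S ∩ W = ∅
    · set Z : Finset (Fin n) := Finset.univ.filter (fun j => S ∩ J j = ∅) with hZ
      have hcond : ∀ T : Finset (Fin n), (S ∩ (W ∪ T.biUnion J) = ∅) ↔ T ⊆ Z := by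
        intro T
        rw [← Finset.disjoint_iff_inter_eq_empty, Finset.disjoint_union_right,
          Finset.disjoint_biUnion_right]
        constructor
        · rintro ⟨-, hd⟩ j hj
          rw [hZ, Finset.mem_filter]
          exact ⟨Finset.mem_univ _, Finset.disjoint_iff_inter_eq_empty.1 (hd j hj)⟩
        · intro hTZ
          refine ⟨Finset.disjoint_iff_inter_eq_empty.2 hSW, fun j hj => ?_⟩
          have hjZ := hTZ hj
          rw [hZ, Finset.mem_filter] at hjZ
          exact Finset.disjoint_iff_inter_eq_empty.2 hjZ.2
      have hterm : ∀ T : Finset (Fin n),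
          (-1:ℝ) ^ T.card * (if S ∩ (W ∪ T.biUnion J) = ∅ then fourier h S else 0)
            = (if T ⊆ Z then (-1:ℝ) ^ T.card else 0) * fourier h S := by
        intro T
        rw [if_congr (hcond T) rfl rfl]
        split_ifs <;> ring
      rw [Finset.sum_congr rfl fun T _ => hterm T, ← Finset.sum_mul]
      have hfilter : Finset.univ.filter (fun T : Finset (Fin n) => T ⊆ Z)
          = Z.powerset := by
        ext T; simp [Finset.mem_powerset]
      have hsum : ∑ T : Finset (Fin n), (if T ⊆ Z then (-1:ℝ) ^ T.card else 0)
          = if Z = ∅ then 1 else 0 := by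
        rw [← Finset.sum_filter, hfilter]
        have h1 : ∏ j ∈ Z, ((-1:ℝ) + 1) = ∑ T ∈ Z.powerset, (-1:ℝ) ^ T.card := by
          rw [Finset.prod_add]
          refine Finset.sum_congr rfl fun T hT => ?_
          rw [Finset.prod_const, Finset.prod_const, one_pow, mul_one]
        rw [← h1]
        rcases eq_or_ne Z ∅ with hZe | hZe
        · rw [hZe, if_pos rfl]; simp
        · rw [if_neg hZe]
          obtain ⟨j, hj⟩ := Finset.nonempty_iff_ne_empty.2 hZe
          exact Finset.prod_eq_zero hj (by norm_num)
      rw [hsum]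
      rcases eq_or_ne Z ∅ with hZe | hZe
      · rw [if_pos hZe, one_mul, if_pos]
        refine ⟨fun j => ?_, hSW⟩
        rw [Finset.nonempty_iff_ne_empty]
        intro hc
        have hjZ : j ∈ Z := by rw [hZ, Finset.mem_filter]; exact ⟨Finset.mem_univ _, hc⟩
        rw [hZe] at hjZ
        exact absurd hjZ (Finset.notMem_empty j)
      · rw [if_neg hZe, zero_mul, if_neg]
        rintro ⟨hj, -⟩
        obtain ⟨j, hjZ⟩ := Finset.nonempty_iff_ne_empty.2 hZe
        rw [hZ, Finset.mem_filter] at hjZ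
        have hne := hj j
        rw [hjZ.2] at hne
        exact Finset.not_nonempty_empty hne
    · rw [if_neg (fun hc => hSW hc.2)]
      apply Finset.sum_eq_zero
      intro T _
      rw [if_neg, mul_zero]
      intro hc
      apply hSW
      apply Finset.subset_empty.1
      rw [← hc]
      exact Finset.inter_subset_inter (Finset.Subset.refl S) Finset.subset_union_left
  -- Step A' : Qhat = ∑ (fourier F S)^2
  have hQ : Qhat h (fun S => (∀ j : Fin n, (S ∩ J j).Nonempty) ∧ S ∩ W = ∅)
      = ∑ S : Finset I, (fourier F S) ^ 2 := by
    unfold Qhat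
    refine Finset.sum_congr rfl fun S _ => ?_
    rw [hFourier S]
    split_ifs <;> simp
  -- Step C : pointwise bound
  have hpoint : ∀ ω : I → Bool,
      F ω ^ 2 ≤ 4 ^ n * M ^ 2 * (condExp (Finset.univ \ W) g ω) ^ 2 := by
    intro ω
    have hc0 : 0 ≤ condExp (Finset.univ \ W) g ω := by
      rw [condExp_sdiff_eq]
      apply expect_nonneg
      intro η
      simp only [hg]
      split_ifs <;> norm_num
    have hFω : F ω = expect (fun η => ∑ T : Finset (Fin n),
        (-1:ℝ) ^ T.card * h (q (W ∪ T.biUnion J) η ω)) := by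
      rw [hF, expect, eq_div_iff (card_pos_real (I := I)).ne', Finset.sum_mul,
        Finset.sum_comm]
      refine Finset.sum_congr rfl fun T _ => ?_
      rw [expect, ← Finset.mul_sum, mul_assoc, div_mul_cancel₀ _ (card_pos_real (I := I)).ne']
    have hdelta : ∀ η : I → Bool,
        |∑ T : Finset (Fin n), (-1:ℝ) ^ T.card * h (q (W ∪ T.biUnion J) η ω)|
          ≤ 2 ^ n * M * g (q W η ω) := by
      intro η
      by_cases hJP : JointlyPivotal h J (q W η ω)
      · simp only [hg, if_pos hJP, mul_one]
        calc |∑ T : Finset (Fin n), (-1:ℝ) ^ T.card * h (q (W ∪ T.biUnion J) η ω)|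
            ≤ ∑ T : Finset (Fin n), |(-1:ℝ) ^ T.card * h (q (W ∪ T.biUnion J) η ω)| :=
              Finset.abs_sum_le_sum_abs _ _
          _ ≤ ∑ _T : Finset (Fin n), M := by
              refine Finset.sum_le_sum fun T _ => ?_
              rw [abs_mul, abs_pow, abs_neg, abs_one, one_pow, one_mul]
              exact hMb _
          _ = 2 ^ n * M := by
              rw [Finset.sum_const, Finset.card_univ, Fintype.card_finset, Fintype.card_fin,
                nsmul_eq_mul]
              push_cast
              ring
      · rw [delta_vanish h J W ω η hJP]
        simp [hg, if_neg hJP]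
    have habs : |F ω| ≤ 2 ^ n * M * condExp (Finset.univ \ W) g ω := by
      rw [hFω, condExp_sdiff_eq]
      calc |expect (fun η => ∑ T : Finset (Fin n),
              (-1:ℝ) ^ T.card * h (q (W ∪ T.biUnion J) η ω))|
          ≤ expect (fun η => |∑ T : Finset (Fin n),
              (-1:ℝ) ^ T.card * h (q (W ∪ T.biUnion J) η ω)|) := expect_abs_le _
        _ ≤ expect (fun η => 2 ^ n * M * g (q W η ω)) := expect_mono hdelta
        _ = 2 ^ n * M * expect (fun η => g (q W η ω)) := expect_const_mul _ _
    have h4 : ((2:ℝ) ^ n) ^ 2 = 4 ^ n := by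
      rw [← pow_mul, mul_comm n 2, pow_mul]
      norm_num
    calc F ω ^ 2 = |F ω| ^ 2 := (sq_abs _).symm
      _ ≤ (2 ^ n * M * condExp (Finset.univ \ W) g ω) ^ 2 :=
          pow_le_pow_left₀ (abs_nonneg _) habs 2
      _ = ((2:ℝ) ^ n) ^ 2 * M ^ 2 * (condExp (Finset.univ \ W) g ω) ^ 2 := by ring
      _ = 4 ^ n * M ^ 2 * (condExp (Finset.univ \ W) g ω) ^ 2 := by rw [h4]
  rw [hQ, parseval]
  calc expect (fun ω => F ω ^ 2)
      ≤ expect (fun ω => 4 ^ n * M ^ 2 * (condExp (Finset.univ \ W) g ω) ^ 2) :=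
        expect_mono hpoint
    _ = 4 ^ n * M ^ 2 * expect (fun ω => (condExp (Finset.univ \ W) g ω) ^ 2) := by
        rw [← expect_const_mul (4 ^ n * M ^ 2) (fun ω => (condExp (Finset.univ \ W) g ω) ^ 2)]


end Cube
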